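/- There is no finite set P of datalog rules over the signature {E, G, B} (E binary; G, B unary) such that T ⊨ P and P ⊨ R, where T is the theory {∀x. G(x)∨B(x); ∀x₁x₀. E(x₁,x₀)∧G(x₀)→B(x₁); ∀x₁x₀. E(x₁,x₀)∧B(x₀)→G(x₁)} and R is the infinite set of rules E(xₙ,x₀) ∧ E(xₙ,xₙ₋₁) ∧ … ∧ E(x₁,x₀) → G(xₙ) for every positive even n. -/

import Mathlib

/-!
Fix `n` larger than every body of `P` and let `Cₙ` be the cycle-plus-chord graph
`{E(n,0)} ∪ {E(i+1,i) : i < n}` with `G` and `B` empty. A body with at most `n` atoms misses one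
of the `n + 1` edges of `Cₙ`; without that edge the graph is a path, hence properly 2-colourable,
and each of the two colourings, read as `(G, B)`, is a model of `T`. A rule entailed by `T`
therefore cannot derive `G` or `B` from its body, so `Cₙ` is a model of `P`. For even `n` it is
not a model of `Rrule n`, whose body it satisfies along the identity assignment.
-/

/-- Function-free atoms over the signature `{E, G, B}` with variables `ℕ`. -/
inductive EGBAtom : Type
  | E : ℕ → ℕ → EGBAtom
  | G : ℕ → EGBAtom
  | B : ℕ → EGBAtom
deriving DecidableEq

/-- A datalog rule: a universally quantified implication from a conjunction of atoms
(the body) to a single atom (the head). -/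
structure DRule : Type where
  body : List EGBAtom
  head : EGBAtom
deriving DecidableEq

/-- Evaluation of an atom in an interpretation under a variable assignment. -/
def evalA {D : Type} (GI BI : D → Prop) (EI : D → D → Prop) (env : ℕ → D) : EGBAtom → Prop
  | .E i j => EI (env i) (env j)
  | .G i => GI (env i)
  | .B i => BI (env i)

/-- Satisfaction of a datalog rule in an interpretation. -/
def satRule {D : Type} (GI BI : D → Prop) (EI : D → D → Prop) (r : DRule) : Prop :=
  ∀ env : ℕ → D, (∀ a ∈ r.body, evalA GI BI EI env a) → evalA GI BI EI env r.head

/-- Models of the theory `T = {∀x. G(x)∨B(x); ∀x₁x₀. E(x₁,x₀)∧G(x₀)→B(x₁);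
∀x₁x₀. E(x₁,x₀)∧B(x₀)→G(x₁)}`. -/
def Tmod {D : Type} (GI BI : D → Prop) (EI : D → D → Prop) : Prop :=
  (∀ x, GI x ∨ BI x) ∧
  (∀ x1 x0, EI x1 x0 → GI x0 → BI x1) ∧
  (∀ x1 x0, EI x1 x0 → BI x0 → GI x1)

/-- The rule `E(xₙ,x₀) ∧ E(xₙ,xₙ₋₁) ∧ … ∧ E(x₁,x₀) → G(xₙ)`. -/
def Rrule (n : ℕ) : DRule :=
  ⟨EGBAtom.E n 0 :: (List.range n).map (fun i => EGBAtom.E (i + 1) i), EGBAtom.G n⟩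

/-- `T ⊨ r`. -/
def TEntails (r : DRule) : Prop :=
  ∀ (D : Type) (GI BI : D → Prop) (EI : D → D → Prop), Tmod GI BI EI → satRule GI BI EI r

section Colouring

variable {D : Type}

theorem evalA_mono {GI BI GI' BI' : D → Prop} {EI EI' : D → D → Prop}
    (hG : ∀ x, GI x → GI' x) (hB : ∀ x, BI x → BI' x) (hE : ∀ x y, EI x y → EI' x y)
    (env : ℕ → D) : ∀ a, evalA GI BI EI env a → evalA GI' BI' EI' env a
  | .E i j => hE (env i) (env j)
  | .G i => hG (env i)
  | .B i => hB (env i)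

theorem tmod_of_properColouring {EI : D → D → Prop} {col : D → Prop}
    (hcol : ∀ x y, EI x y → (col x ↔ ¬ col y)) : Tmod col (fun x => ¬ col x) EI :=
  ⟨fun _ => em _, fun x y hxy hy hx => (hcol x y hxy).mp hx hy,
    fun x y hxy hy => (hcol x y hxy).mpr hy⟩

/-- Both ways of reading the two colour classes as `(G, B)` give models of `T`, and no `G`- or
`B`-atom holds in both. -/
theorem evalA_head_of_properColouring {r : DRule} (hr : TEntails r) {EI : D → D → Prop}
    {col : D → Prop} (hcol : ∀ x y, EI x y → (col x ↔ ¬ col y)) {env : ℕ → D}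
    (hbody : ∀ a ∈ r.body, evalA (fun _ => False) (fun _ => False) EI env a) :
    evalA (fun _ => False) (fun _ => False) EI env r.head := by
  have hcol' : ∀ x y, EI x y → (¬ col x ↔ ¬ ¬ col y) := fun x y hxy =>
    not_congr (hcol x y hxy)
  have head_of_model : ∀ GI BI : D → Prop, Tmod GI BI EI → evalA GI BI EI env r.head :=
    fun GI BI hT => hr D GI BI EI hT env fun a ha =>
      evalA_mono (fun _ => False.elim) (fun _ => False.elim) (fun _ _ => id) env a (hbody a ha)
  have h₁ := head_of_model _ _ (tmod_of_properColouring hcol)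
  have h₂ := head_of_model _ _ (tmod_of_properColouring hcol')
  cases hh : r.head with
  | E i j => rw [hh] at h₁; exact h₁
  | G i => rw [hh] at h₁ h₂; exact h₂ h₁
  | B i => rw [hh] at h₁ h₂; exact h₂ h₁

end Colouring

def cycleChord (n : ℕ) (x y : ℕ) : Prop :=
  (x = n ∧ y = 0) ∨ (x = y + 1 ∧ x ≤ n)

/-- Numbers the edges of `cycleChord n` by `0, …, n`, the chord getting `0` (for `n = 1` the
chord is the edge `1 → 0`). -/
def edgeIndex (x y : ℕ) : ℕ :=
  if x = y + 1 then x else 0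

/-- Without edge `k` the cycle is a path; the parity shift by `n + 1` from vertex `k` on makes the
colouring proper across the chord. -/
theorem cycleChord_properColouring {n k : ℕ} (hk : k ≤ n) (x y : ℕ) (hxy : cycleChord n x y)
    (hne : edgeIndex x y ≠ k) :
    ((x + if x < k then 0 else n + 1) % 2 = 0 ↔ ¬ (y + if y < k then 0 else n + 1) % 2 = 0) := by
  unfold cycleChord at hxy
  unfold edgeIndex at hne
  split_ifs at hne ⊢ <;> omega

def atomEdgeIndex (env : ℕ → ℕ) : EGBAtom → ℕ
  | .E i j => edgeIndex (env i) (env j)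
  | _ => 0

theorem satRule_cycleChord {r : DRule} (hr : TEntails r) {n : ℕ} (hlen : r.body.length ≤ n) :
    satRule (fun _ => False) (fun _ => False) (cycleChord n) r := by
  classical
  intro env hbody
  obtain ⟨k, hk, hkbody⟩ :
      ∃ k ∈ Finset.range (n + 1), k ∉ (r.body.map (atomEdgeIndex env)).toFinset :=
    Finset.exists_mem_notMem_of_card_lt_card <| by
      grw [List.toFinset_card_le, List.length_map, Finset.card_range]
      omega
  have hkn : k ≤ n := Nat.lt_succ_iff.mp (Finset.mem_range.mp hk)
  let EI' : ℕ → ℕ → Prop := fun x y => cycleChord n x y ∧ edgeIndex x y ≠ k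
  have hbody' : ∀ a ∈ r.body, evalA (fun _ => False) (fun _ => False) EI' env a := by
    intro a ha
    have hka : atomEdgeIndex env a ≠ k := fun h =>
      hkbody (List.mem_toFinset.mpr (List.mem_map.mpr ⟨a, ha, h⟩))
    have := hbody a ha
    cases a with
    | E i j => exact ⟨this, hka⟩
    | G i => exact this.elim
    | B i => exact this.elim
  exact evalA_mono (fun _ => id) (fun _ => id) (fun _ _ => And.left) env _ <|
    evalA_head_of_properColouring hr (fun x y hxy => cycleChord_properColouring hkn x y hxy.1 hxy.2)
      hbody'

theorem evalA_cycleChord_Rrule_body {GI BI : ℕ → Prop} (n : ℕ) :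
    ∀ a ∈ (Rrule n).body, evalA GI BI (cycleChord n) id a := by
  intro a ha
  simp only [Rrule, List.mem_cons, List.mem_map, List.mem_range] at ha
  rcases ha with rfl | ⟨i, hi, rfl⟩
  · exact Or.inl ⟨rfl, rfl⟩
  · exact Or.inr ⟨rfl, hi⟩

/-- there is no finite set `P` of datalog rules over `{E,G,B}` with
`T ⊨ P` and `P ⊨ R`, where `R` consists of the rules `Rrule n` for all positive even `n`. -/
theorem no_finite_datalog_interpolant :
    ¬ ∃ P : Finset DRule,
      (∀ r ∈ P, ∀ (D : Type) (GI BI : D → Prop) (EI : D → D → Prop),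
        Tmod GI BI EI → satRule GI BI EI r) ∧
      (∀ n : ℕ, 0 < n → Even n →
        ∀ (D : Type) (GI BI : D → Prop) (EI : D → D → Prop),
          (∀ r ∈ P, satRule GI BI EI r) → satRule GI BI EI (Rrule n)) := by
  rintro ⟨P, hT, hR⟩
  set m := P.sup fun r => r.body.length
  have hP : ∀ r ∈ P, satRule (fun _ => False) (fun _ => False) (cycleChord (2 * (m + 1))) r :=
    fun r hr => satRule_cycleChord (hT r hr) <| by
      have := Finset.le_sup (f := fun r => r.body.length) hr
      omega
  exact hR (2 * (m + 1)) (by omega) (even_two_mul _) ℕ _ _ _ hP id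
    (evalA_cycleChord_Rrule_body _)
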